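/- arXiv:1002.0780 — 2 statements merged into one kernel-verified Lean document; each statement's English description precedes it below -/
import Mathlib

section
/- Let K > 2 be a real number, let H ∈ [1/2 + 1/K, 1), and let t > 0. Then ∫_{−∞}^t (f_H(t,s))^K ds < ∫_0^t (z_H(t,s))^K ds; in particular the left-hand side is finite while the right-hand side is infinite. -/
open MeasureTheory Set

/-- Normalizing constant of the Mandelbrot–Van Ness kernel. -/
noncomputable def C_H (H : ℝ) : ℝ :=
  Real.sqrt (2 * H * Real.sin (Real.pi * H) * Real.Gamma (2 * H)) / Real.Gamma (H + 1/2)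

/-- Normalizing constant of the Molchan–Golosov kernel. -/
noncomputable def c_H (H : ℝ) : ℝ :=
  (Real.Gamma (H + 1/2))⁻¹ *
    Real.sqrt (2 * H * Real.Gamma (H + 1/2) * Real.Gamma (3/2 - H) / Real.Gamma (2 - 2*H))

/-- Mandelbrot–Van Ness kernel `f_H(t,s) = C_H((t-s)_+^{H-1/2} - (-s)_+^{H-1/2})`. -/
noncomputable def f_H (H t s : ℝ) : ℝ :=
  C_H H * (max (t - s) 0 ^ (H - 1/2) - max (-s) 0 ^ (H - 1/2))

/-- Molchan–Golosov kernel for `H ∈ (1/2,1)`: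
`z_H(t,s) = (H-1/2) c_H s^{1/2-H} ∫_s^t u^{H-1/2}(u-s)^{H-3/2} du` for `0 < s < t`,
and `0` otherwise. -/
noncomputable def z_H (H t s : ℝ) : ℝ :=
  if 0 < s ∧ s < t then
    (H - 1/2) * c_H H * s ^ ((1:ℝ)/2 - H) *
      ∫ u in Set.Ioo s t, u ^ (H - 1/2) * (u - s) ^ (H - 3/2)
  else 0

/-!
On `s < -t` concavity of `x ↦ x ^ (H - 1/2)` gives `f_H(t,s) ≤ (H - 1/2) C_H t (-s)^(H - 3/2)`,
which is `K`-integrable at `-∞` because `(H - 3/2) K < -1`; on `[-t, t)` the kernel is bounded.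
For `0 < s < t/2` the inner integral of `z_H` is at least a positive constant (restrict it to
`(t/2, t)`), so `z_H(t,s) ≥ A s^(1/2 - H)`, and `s^((1/2 - H) K)` is not integrable at `0`
because `(1/2 - H) K ≤ -1`.
-/

lemma C_H_nonneg {H : ℝ} (hH : -1/2 ≤ H) : 0 ≤ C_H H :=
  div_nonneg (Real.sqrt_nonneg _) (Real.Gamma_nonneg_of_nonneg (by linarith))

lemma c_H_pos {H : ℝ} (hH : H ∈ Ioo 0 1) : 0 < c_H H := by
  obtain ⟨h₀, h₁⟩ := hH
  have hG₁ := Real.Gamma_pos_of_pos (by linarith : 0 < H + 1/2)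
  have hG₂ := Real.Gamma_pos_of_pos (by linarith : 0 < 3/2 - H)
  have hG₃ := Real.Gamma_pos_of_pos (by linarith : 0 < 2 - 2*H)
  unfold c_H
  positivity

lemma rpow_add_sub_rpow_le {a x y : ℝ} (ha₀ : 0 ≤ a) (ha₁ : a ≤ 1) (hx : 0 < x)
    (hy : 0 ≤ y) :
    (x + y) ^ a - x ^ a ≤ a * y * x ^ (a - 1) := by
  have hbern : (1 + y / x) ^ a ≤ 1 + a * (y / x) :=
    rpow_one_add_le_one_add_mul_self (by linarith [div_nonneg hy hx.le]) ha₀ ha₁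
  have hfactor : (x + y) ^ a = x ^ a * (1 + y / x) ^ a := by
    rw [← Real.mul_rpow hx.le (by positivity)]
    congr 1
    field_simp
  rw [hfactor, Real.rpow_sub_one hx.ne']
  calc x ^ a * (1 + y / x) ^ a - x ^ a ≤ x ^ a * (1 + a * (y / x)) - x ^ a := by gcongr
    _ = a * y * (x ^ a / x) := by field_simp; ring

lemma f_H_nonneg {H t s : ℝ} (hH : 1/2 ≤ H) (ht : 0 ≤ t) : 0 ≤ f_H H t s :=
  mul_nonneg (C_H_nonneg (by linarith)) <| sub_nonneg.2 <|
    Real.rpow_le_rpow (le_max_right _ _) (max_le_max (by linarith) le_rfl) (by linarith)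

lemma f_H_le_of_neg_le {H t s : ℝ} (hH : 1/2 ≤ H) (ht : 0 ≤ t) (hs : -t ≤ s) :
    f_H H t s ≤ C_H H * (2 * t) ^ (H - 1/2) := by
  refine mul_le_mul_of_nonneg_left ?_ (C_H_nonneg (by linarith))
  have h₁ : max (t - s) 0 ^ (H - 1/2) ≤ (2 * t) ^ (H - 1/2) :=
    Real.rpow_le_rpow (le_max_right _ _) (max_le (by linarith) (by linarith)) (by linarith)
  have h₂ : 0 ≤ max (-s) 0 ^ (H - 1/2) := Real.rpow_nonneg (le_max_right _ _) _
  linarith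

lemma f_H_le_of_lt_neg {H t s : ℝ} (hH : H ∈ Icc (1/2) (3/2)) (ht : 0 ≤ t) (hs : s < -t) :
    f_H H t s ≤ C_H H * ((H - 1/2) * t * (-s) ^ (H - 3/2)) := by
  have hs₀ : 0 < -s := by linarith
  rw [f_H, max_eq_left (by linarith : 0 ≤ t - s), max_eq_left hs₀.le]
  refine mul_le_mul_of_nonneg_left ?_ (C_H_nonneg (by linarith [hH.1]))
  have h := rpow_add_sub_rpow_le (a := H - 1/2) (by linarith [hH.1]) (by linarith [hH.2]) hs₀ ht
  rwa [neg_add_eq_sub, show H - 1/2 - 1 = H - 3/2 by ring] at h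

lemma integrableOn_Iio_neg_rpow {r b : ℝ} (hr : r < -1) (hb : 0 < b) :
    IntegrableOn (fun s : ℝ => (-s) ^ r) (Iio (-b)) := by
  have hpre : Iio (-b) = Neg.neg ⁻¹' Ioi b := by ext; simp
  rw [hpre]
  exact ((Measure.measurePreserving_neg volume).integrableOn_comp_preimage
    (Homeomorph.neg ℝ).measurableEmbedding).2 (integrableOn_Ioi_rpow_of_lt hr hb)

lemma setLIntegral_Iio_f_H_rpow_lt_top {K H t : ℝ} (hH : H ∈ Icc (1/2) (3/2))
    (hK : (H - 3/2) * K < -1) (ht : 0 < t) :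
    ∫⁻ s in Iio t, ENNReal.ofReal (f_H H t s ^ K) < ⊤ := by
  have hK₀ : 0 ≤ K := by nlinarith [hH.2]
  rw [← Iio_union_Ico_eq_Iio (by linarith : -t ≤ t),
    lintegral_union measurableSet_Ico ((Iio_disjoint_Ici le_rfl).mono_right Ico_subset_Ici_self)]
  refine ENNReal.add_lt_top.2 ⟨?_, ?_⟩
  · have hbound : IntegrableOn
        (fun s : ℝ => (C_H H * ((H - 1/2) * t)) ^ K * (-s) ^ ((H - 3/2) * K)) (Iio (-t)) :=
      (integrableOn_Iio_neg_rpow hK ht).const_mul _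
    refine lt_of_le_of_lt (setLIntegral_mono' measurableSet_Iio fun s hs => ?_)
      hbound.setLIntegral_lt_top
    have hs₀ : 0 < -s := by linarith [mem_Iio.1 hs]
    have hC : 0 ≤ C_H H * ((H - 1/2) * t) :=
      mul_nonneg (C_H_nonneg (by linarith [hH.1])) (mul_nonneg (by linarith [hH.1]) ht.le)
    refine ENNReal.ofReal_le_ofReal ?_
    rw [Real.rpow_mul hs₀.le, ← Real.mul_rpow hC (Real.rpow_nonneg hs₀.le _), mul_assoc]
    exact Real.rpow_le_rpow (f_H_nonneg hH.1 ht.le) (f_H_le_of_lt_neg hH ht.le hs) hK₀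
  · refine setLIntegral_lt_top_of_le_nnreal (by simp)
      ⟨((C_H H * (2 * t) ^ (H - 1/2)) ^ K).toNNReal, fun s hs => ?_⟩
    exact ENNReal.ofReal_le_ofReal (Real.rpow_le_rpow (f_H_nonneg hH.1 ht.le)
      (f_H_le_of_neg_le hH.1 ht.le hs.1) hK₀)

lemma integrableOn_rpow_mul_sub_rpow {a b s t : ℝ} (ha : 0 ≤ a) (hb : -1 < b) (hs : 0 ≤ s) :
    IntegrableOn (fun u : ℝ => u ^ a * (u - s) ^ b) (Ioo s t) := by
  rcases le_total t s with hts | hst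
  · simp [Ioo_eq_empty_of_le hts]
  have hsub : IntegrableOn (fun u : ℝ => (u - s) ^ b) (Ioo s t) := by
    have h := (intervalIntegral.intervalIntegrable_rpow' (a := 0) (b := t - s) hb).comp_sub_right s
    rwa [zero_add, sub_add_cancel, intervalIntegrable_iff_integrableOn_Ioo_of_le hst] at h
  refine (hsub.const_mul (t ^ a)).mono' (by fun_prop) ?_
  refine (ae_restrict_iff' measurableSet_Ioo).2 (Filter.Eventually.of_forall fun u hu => ?_)
  have hu₀ : 0 ≤ u := hs.trans hu.1.le
  have hus : 0 ≤ (u - s) ^ b := Real.rpow_nonneg (by linarith [hu.1]) _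
  rw [Real.norm_of_nonneg (mul_nonneg (Real.rpow_nonneg hu₀ _) hus)]
  exact mul_le_mul_of_nonneg_right (Real.rpow_le_rpow hu₀ hu.2.le ha) hus

lemma le_setIntegral_rpow_mul_sub_rpow {a b s c t : ℝ} (ha : 0 ≤ a) (hb₁ : -1 < b)
    (hb₂ : b ≤ 0) (hs : 0 ≤ s) (hsc : s ≤ c) (hct : c ≤ t) :
    c ^ a * t ^ b * (t - c) ≤ ∫ u in Ioo s t, u ^ a * (u - s) ^ b := by
  have hc : 0 ≤ c := hs.trans hsc
  have hint := integrableOn_rpow_mul_sub_rpow (t := t) ha hb₁ hs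
  have hsub : Ioo c t ⊆ Ioo s t := Ioo_subset_Ioo_left hsc
  calc c ^ a * t ^ b * (t - c) = ∫ _ in Ioo c t, c ^ a * t ^ b := by
        rw [setIntegral_const, Real.volume_real_Ioo_of_le hct, smul_eq_mul, mul_comm]
    _ ≤ ∫ u in Ioo c t, u ^ a * (u - s) ^ b := by
        refine setIntegral_mono_on (integrableOn_const (by simp)) (hint.mono_set hsub)
          measurableSet_Ioo fun u hu => ?_
        exact mul_le_mul (Real.rpow_le_rpow hc hu.1.le ha)
          (Real.rpow_le_rpow_of_nonpos (by linarith [hu.1]) (by linarith [hu.2]) hb₂)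
          (Real.rpow_nonneg (hc.trans hct) _) (Real.rpow_nonneg (hc.trans hu.1.le) _)
    _ ≤ ∫ u in Ioo s t, u ^ a * (u - s) ^ b := by
        refine setIntegral_mono_set hint ?_ hsub.eventuallyLE
        refine (ae_restrict_iff' measurableSet_Ioo).2 (Filter.Eventually.of_forall fun u hu => ?_)
        exact mul_nonneg (Real.rpow_nonneg (hs.trans hu.1.le) _)
          (Real.rpow_nonneg (by linarith [hu.1]) _)

lemma exists_pos_mul_rpow_le_z_H {H t : ℝ} (hH : H ∈ Ioo (1/2) 1) (ht : 0 < t) :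
    ∃ A > 0, ∀ s ∈ Ioo 0 (t/2), A * s ^ (1/2 - H) ≤ z_H H t s := by
  obtain ⟨hH₁, hH₂⟩ := hH
  have hc : 0 < (H - 1/2) * c_H H := mul_pos (by linarith) (c_H_pos ⟨by linarith, hH₂⟩)
  set I := (t/2) ^ (H - 1/2) * t ^ (H - 3/2) * (t/2)
  have hI : 0 < I := by positivity
  refine ⟨(H - 1/2) * c_H H * I, mul_pos hc hI, fun s hs => ?_⟩
  rw [z_H, if_pos ⟨hs.1, by linarith [hs.2]⟩]
  have hlow := le_setIntegral_rpow_mul_sub_rpow (a := H - 1/2) (b := H - 3/2)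
    (by linarith) (by linarith) (by linarith) hs.1.le hs.2.le (by linarith : t/2 ≤ t)
  rw [show t - t/2 = t/2 by ring] at hlow
  calc (H - 1/2) * c_H H * I * s ^ (1/2 - H) = (H - 1/2) * c_H H * s ^ (1/2 - H) * I := by ring
    _ ≤ _ := mul_le_mul_of_nonneg_left hlow (mul_nonneg hc.le (Real.rpow_nonneg hs.1.le _))

lemma setLIntegral_Ioo_zero_rpow_eq_top {q b : ℝ} (hq : q ≤ -1) (hb : 0 < b) :
    ∫⁻ s in Ioo 0 b, ENNReal.ofReal (s ^ q) = ⊤ := by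
  by_contra h
  have hnonneg : 0 ≤ᵐ[volume.restrict (Ioo 0 b)] fun s : ℝ => s ^ q :=
    (ae_restrict_iff' measurableSet_Ioo).2
      (Filter.Eventually.of_forall fun s hs => Real.rpow_nonneg hs.1.le q)
  have hint : IntegrableOn (fun s : ℝ => s ^ q) (Ioo 0 b) :=
    (lintegral_ofReal_ne_top_iff_integrable (by fun_prop) hnonneg).1 h
  rw [intervalIntegral.integrableOn_Ioo_rpow_iff hb] at hint
  linarith

lemma setLIntegral_Ioo_zero_eq_top_of_mul_rpow_le {f : ℝ → ℝ} {A q b : ℝ} (hA : 0 < A)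
    (hq : q ≤ -1) (hb : 0 < b) (hf : ∀ s ∈ Ioo 0 b, A * s ^ q ≤ f s) :
    ∫⁻ s in Ioo 0 b, ENNReal.ofReal (f s) = ⊤ := by
  refine top_le_iff.1 ?_
  calc ⊤ = ENNReal.ofReal A * ∫⁻ s in Ioo 0 b, ENNReal.ofReal (s ^ q) := by
        rw [setLIntegral_Ioo_zero_rpow_eq_top hq hb, ENNReal.mul_top (by simpa using hA)]
    _ = ∫⁻ s in Ioo 0 b, ENNReal.ofReal (A * s ^ q) := by
        simp_rw [ENNReal.ofReal_mul hA.le]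
        exact (lintegral_const_mul' _ _ ENNReal.ofReal_ne_top).symm
    _ ≤ _ := setLIntegral_mono' measurableSet_Ioo fun s hs => ENNReal.ofReal_le_ofReal (hf s hs)

lemma setLIntegral_Ioo_z_H_rpow_eq_top {K H t : ℝ} (hH : H ∈ Ioo (1/2) 1)
    (hK : (1/2 - H) * K ≤ -1) (ht : 0 < t) :
    ∫⁻ s in Ioo 0 t, ENNReal.ofReal (z_H H t s ^ K) = ⊤ := by
  have hK₀ : 0 ≤ K := by nlinarith [hH.1]
  obtain ⟨A, hA, hAz⟩ := exists_pos_mul_rpow_le_z_H hH ht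
  have hpow : ∀ s ∈ Ioo 0 (t/2), A ^ K * s ^ ((1/2 - H) * K) ≤ z_H H t s ^ K := by
    intro s hs
    rw [Real.rpow_mul hs.1.le, ← Real.mul_rpow hA.le (Real.rpow_nonneg hs.1.le _)]
    exact Real.rpow_le_rpow (mul_nonneg hA.le (Real.rpow_nonneg hs.1.le _)) (hAz s hs) hK₀
  have hhalf := setLIntegral_Ioo_zero_eq_top_of_mul_rpow_le (Real.rpow_pos_of_pos hA K) hK
    (half_pos ht) hpow
  exact top_le_iff.1 (hhalf ▸ lintegral_mono_set (Ioo_subset_Ioo_right (half_le_self ht.le)))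

/-- For real `K > 2`, `H ∈ [1/2 + 1/K, 1)` and `t > 0`:
`∫_{−∞}^t (f_H(t,s))^K ds < ∫_0^t (z_H(t,s))^K ds`; in particular the left-hand side is
finite while the right-hand side is infinite. -/
theorem fH_pow_lt_zH_pow (K H t : ℝ) (hK : 2 < K)
    (hH : H ∈ Set.Ico (1/2 + 1/K) (1:ℝ)) (ht : 0 < t) :
    (∫⁻ s in Set.Iio t, ENNReal.ofReal (f_H H t s ^ K))
        < (∫⁻ s in Set.Ioo (0:ℝ) t, ENNReal.ofReal (z_H H t s ^ K))
      ∧ (∫⁻ s in Set.Iio t, ENNReal.ofReal (f_H H t s ^ K)) < ⊤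
      ∧ (∫⁻ s in Set.Ioo (0:ℝ) t, ENNReal.ofReal (z_H H t s ^ K)) = ⊤ := by
  obtain ⟨hH₁, hH₂⟩ := hH
  have hK₀ : 0 < K := by linarith
  have hKinv : 0 < 1/K := one_div_pos.2 hK₀
  have hf := setLIntegral_Iio_f_H_rpow_lt_top (K := K) (H := H) ⟨by linarith, by linarith⟩
    (by nlinarith) ht
  have hz := setLIntegral_Ioo_z_H_rpow_eq_top (K := K) (H := H) ⟨by linarith, hH₂⟩
    (by nlinarith [one_div_mul_cancel hK₀.ne', mul_le_mul_of_nonneg_right hH₁ hK₀.le]) ht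
  exact ⟨hz ▸ hf, hf, hz⟩
end

section
/- Let H ∈ (1/2,1). Then ∫_0^1 (z_H(1,s))^4 ds ≥ (c_H^4/16)·∫_0^1 s^{4(1/2−H)}(1−s)^{4(H−1/2)}(1 + s^{2H−1})^4 ds. -/
open MeasureTheory Set

/-!
Put `p = H - 1/2`, so that `z_H(1,s) = c_H s^{-p} · p ∫_s^1 u^p (u-s)^{p-1} du`. The function
`u^p (u-s)^p` rises from `0` to `(1-s)^p` on `[s,1]`, and in its derivative
`p u^{p-1} (u-s)^p + p u^p (u-s)^{p-1}` the first term is at most `p (1-s)^p u^{2p-1}` because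
`u - s ≤ u (1-s)`. Integrating gives `p ∫_s^1 u^p (u-s)^{p-1} du ≥ (1-s)^p (1 + s^{2p}) / 2`,
hence a nonnegative pointwise lower bound for `z_H(1,s)` whose fourth power is the claimed
integrand.
-/

lemma c_H_nonneg {H : ℝ} (hH : 0 < H + 1/2) : 0 ≤ c_H H :=
  mul_nonneg (inv_nonneg.2 (Real.Gamma_pos_of_pos hH).le) (Real.sqrt_nonneg _)

lemma intervalIntegrable_rpow_mul_sub_rpow {p s t : ℝ} (q : ℝ) (hp : 0 < p) (hs : 0 < s)
    (hst : s ≤ t) :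
    IntervalIntegrable (fun u : ℝ => u ^ q * (u - s) ^ (p - 1)) volume s t := by
  have hsing : IntervalIntegrable (fun u : ℝ => (u - s) ^ (p - 1)) volume s t := by
    simpa using (intervalIntegral.intervalIntegrable_rpow' (a := 0) (b := t - s)
      (by linarith : -1 < p - 1)).comp_sub_right s
  refine hsing.continuousOn_mul fun u hu => ?_
  rw [uIcc_of_le hst] at hu
  exact (Real.continuousAt_rpow_const u q (Or.inl (hs.trans_le hu.1).ne')).continuousWithinAt

lemma hasDerivAt_rpow_mul_sub_rpow {p s u : ℝ} (hu : 0 < u) (hsu : s < u) :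
    HasDerivAt (fun x : ℝ => x ^ p * (x - s) ^ p)
      (p * u ^ (p - 1) * (u - s) ^ p + u ^ p * (p * (u - s) ^ (p - 1))) u := by
  have hsub : HasDerivAt (fun x : ℝ => (x - s) ^ p) (p * (u - s) ^ (p - 1)) u := by
    simpa using ((hasDerivAt_id u).sub_const s).rpow_const (p := p) (Or.inl (sub_pos.2 hsu).ne')
  exact (Real.hasDerivAt_rpow_const (Or.inl hu.ne')).mul hsub

lemma sub_rpow_le_one_sub_rpow_mul_rpow {p s u : ℝ} (hp : 0 ≤ p) (hs : 0 ≤ s) (hsu : s ≤ u)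
    (hu : u ≤ 1) : (u - s) ^ p ≤ (1 - s) ^ p * u ^ p := by
  rw [← Real.mul_rpow (by linarith) (by linarith)]
  exact Real.rpow_le_rpow (by linarith) (by nlinarith) hp

lemma integral_rpow_two_mul_sub_one {p s : ℝ} (hp : 0 < p) :
    ∫ u in s..1, u ^ (2 * p - 1) = (1 - s ^ (2 * p)) / (2 * p) := by
  rw [integral_rpow (Or.inl (by linarith)), sub_add_cancel, Real.one_rpow]

theorem one_sub_rpow_mul_one_add_rpow_div_two_le_mul_integral {p s : ℝ} (hp : 0 < p)
    (hs : 0 < s) (hs1 : s ≤ 1) :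
    (1 - s) ^ p * (1 + s ^ (2 * p)) / 2 ≤ p * ∫ u in s..1, u ^ p * (u - s) ^ (p - 1) := by
  have hint₁ : IntervalIntegrable (fun u : ℝ => p * (1 - s) ^ p * u ^ (2 * p - 1)) volume s 1 :=
    (intervalIntegral.intervalIntegrable_rpow' (by linarith)).const_mul _
  have hint₂ : IntervalIntegrable (fun u : ℝ => p * (u ^ p * (u - s) ^ (p - 1))) volume s 1 :=
    (intervalIntegrable_rpow_mul_sub_rpow p hp hs hs1).const_mul p
  have hcont : ContinuousOn (fun u : ℝ => u ^ p * (u - s) ^ p) (Icc s 1) :=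
    ((continuous_id.rpow_const fun _ => Or.inr hp.le).mul
      ((continuous_id.sub continuous_const).rpow_const fun _ => Or.inr hp.le)).continuousOn
  have hderiv_le : ∀ u ∈ Ioo s 1,
      p * u ^ (p - 1) * (u - s) ^ p + u ^ p * (p * (u - s) ^ (p - 1)) ≤
        p * (1 - s) ^ p * u ^ (2 * p - 1) + p * (u ^ p * (u - s) ^ (p - 1)) := by
    rintro u ⟨hsu, hu1⟩
    have hu : 0 < u := hs.trans hsu
    have hpow : u ^ (p - 1) * u ^ p = u ^ (2 * p - 1) := by
      rw [← Real.rpow_add hu]; ring_nf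
    have := mul_le_mul_of_nonneg_left
      (sub_rpow_le_one_sub_rpow_mul_rpow hp.le hs.le hsu.le hu1.le)
      (mul_nonneg hp.le (Real.rpow_nonneg hu.le (p - 1)))
    rw [← hpow]
    linarith
  have hFTC := intervalIntegral.sub_le_integral_of_hasDeriv_right_of_le hs1 hcont
    (fun u hu => (hasDerivAt_rpow_mul_sub_rpow (hs.trans hu.1) hu.1).hasDerivWithinAt)
    ((intervalIntegrable_iff_integrableOn_Icc_of_le hs1).1 (hint₁.add hint₂)) hderiv_le
  rw [intervalIntegral.integral_add hint₁ hint₂, intervalIntegral.integral_const_mul,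
    intervalIntegral.integral_const_mul, integral_rpow_two_mul_sub_one hp, sub_self,
    Real.zero_rpow hp.ne', Real.one_rpow] at hFTC
  field_simp at hFTC ⊢
  linarith

lemma le_z_H_one {H s : ℝ} (hH : 1/2 < H) (hs : s ∈ Ioo (0:ℝ) 1) :
    c_H H / 2 * (s ^ ((1:ℝ)/2 - H) * (1 - s) ^ (H - 1/2) * (1 + s ^ (2*H - 1))) ≤
      z_H H 1 s := by
  obtain ⟨hs0, hs1⟩ := hs
  have hbound :=
    one_sub_rpow_mul_one_add_rpow_div_two_le_mul_integral (sub_pos.2 hH) hs0 hs1.le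
  rw [intervalIntegral.integral_of_le hs1.le, integral_Ioc_eq_integral_Ioo,
    show 2 * (H - 1/2) = 2 * H - 1 by ring, show H - 1/2 - 1 = H - 3/2 by ring] at hbound
  rw [z_H, if_pos ⟨hs0, hs1⟩]
  have hc : 0 ≤ c_H H * s ^ ((1:ℝ)/2 - H) :=
    mul_nonneg (c_H_nonneg (by linarith)) (Real.rpow_nonneg hs0.le _)
  calc c_H H / 2 * (s ^ ((1:ℝ)/2 - H) * (1 - s) ^ (H - 1/2) * (1 + s ^ (2*H - 1)))
      = c_H H * s ^ ((1:ℝ)/2 - H) * ((1 - s) ^ (H - 1/2) * (1 + s ^ (2*H - 1)) / 2) := by ring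
    _ ≤ c_H H * s ^ ((1:ℝ)/2 - H) *
        ((H - 1/2) * ∫ u in Ioo s 1, u ^ (H - 1/2) * (u - s) ^ (H - 3/2)) :=
      mul_le_mul_of_nonneg_left hbound hc
    _ = _ := by ring

/-- For `H ∈ (1/2,1)`:
`∫_0^1 (z_H(1,s))^4 ds ≥ (c_H^4/16) ∫_0^1 s^{4(1/2−H)}(1−s)^{4(H−1/2)}(1+s^{2H−1})^4 ds`
(in the extended reals). -/
theorem zH_fourth_integral_lower_bound (H : ℝ) (hH : H ∈ Set.Ioo (1/2 : ℝ) 1) :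
    ENNReal.ofReal (c_H H ^ 4 / 16) *
        ∫⁻ s in Set.Ioo (0:ℝ) 1,
          ENNReal.ofReal
            (s ^ (4 * ((1:ℝ)/2 - H)) * (1 - s) ^ (4 * (H - 1/2)) * (1 + s ^ (2*H - 1)) ^ 4)
      ≤ ∫⁻ s in Set.Ioo (0:ℝ) 1, ENNReal.ofReal (z_H H 1 s ^ 4) := by
  rw [← lintegral_const_mul' _ _ ENNReal.ofReal_ne_top]
  refine setLIntegral_mono' measurableSet_Ioo fun s hs => ?_
  have hs₀ : 0 ≤ s := hs.1.le
  have h1s : 0 ≤ 1 - s := by linarith [hs.2]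
  have hc : 0 ≤ c_H H := c_H_nonneg (by linarith [hH.1])
  rw [← ENNReal.ofReal_mul (by positivity)]
  refine ENNReal.ofReal_le_ofReal ((le_of_eq ?_).trans
    (pow_le_pow_left₀ (by positivity) (le_z_H_one hH.1 hs) 4))
  rw [mul_comm 4, mul_comm 4, Real.rpow_mul hs₀, Real.rpow_mul h1s, Real.rpow_ofNat,
    Real.rpow_ofNat]
  ring
end
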